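/- Let (A, →, ⇝, 1) be a p-semisimple pseudo-BCI algebra. Then a map d : A → A is a type II symmetric derivation on A if and only if it is a type II implicative derivation on A. -/
import Mathlib


/-- A pseudo-BCI algebra `(A, →, ⇝, 1)`: `ar` is `→`, `wa` is `⇝`, `one` is `1`. -/
structure PseudoBCI (A : Type*) where
  ar : A → A → A
  wa : A → A → A
  one : A
  ax1 : ∀ x y z, wa (ar x y) (wa (ar y z) (ar x z)) = one
  ax2 : ∀ x y z, ar (wa x y) (ar (wa y z) (ar x z)) = one
  ax3 : ∀ x, ar one x = x
  ax4 : ∀ x, wa one x = x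
  ax5 : ∀ x y, ar x y = one → ar y x = one → x = y

namespace PseudoBCI

variable {A : Type*}

/-- The order: `x ≤ y` iff `x → y = 1`. -/
def le (P : PseudoBCI A) (x y : A) : Prop := P.ar x y = P.one

/-- `x ∪₁ y = (x → y) ⇝ y`. -/
def cup1 (P : PseudoBCI A) (x y : A) : A := P.wa (P.ar x y) y

/-- `x ∪₂ y = (x ⇝ y) → y`. -/
def cup2 (P : PseudoBCI A) (x y : A) : A := P.ar (P.wa x y) y

/-- `φ_x = (x → 1) ⇝ 1`. -/
def phi (P : PseudoBCI A) (x : A) : A := P.wa (P.ar x P.one) P.one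

/-- `a` is an atom: `a ≤ x` implies `x = a`. -/
def IsAtom (P : PseudoBCI A) (a : A) : Prop := ∀ x, P.le a x → x = a

/-- `x ∈ K(A)` iff `x ≤ 1`. -/
def InK (P : PseudoBCI A) (x : A) : Prop := P.le x P.one

/-- Type I implicative derivation. -/
def IsIDerI (P : PseudoBCI A) (d : A → A) : Prop :=
  (∀ x y, d (P.ar x y) = P.cup2 (P.ar x (d y)) (P.ar (d x) y)) ∧
  (∀ x y, d (P.wa x y) = P.cup1 (P.wa x (d y)) (P.wa (d x) y))

/-- Type II implicative derivation. -/
def IsIDerII (P : PseudoBCI A) (d : A → A) : Prop :=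
  (∀ x y, d (P.ar x y) = P.cup2 (P.ar (d x) y) (P.ar x (d y))) ∧
  (∀ x y, d (P.wa x y) = P.cup1 (P.wa (d x) y) (P.wa x (d y)))

/-- Type I symmetric derivation. -/
def IsSDerI (P : PseudoBCI A) (d : A → A) : Prop :=
  (∀ x y, d (P.ar x y) = P.cup2 (P.ar x (d y)) (P.ar y (d x))) ∧
  (∀ x y, d (P.wa x y) = P.cup1 (P.wa x (d y)) (P.wa y (d x)))

/-- Type II symmetric derivation. -/
def IsSDerII (P : PseudoBCI A) (d : A → A) : Prop :=
  (∀ x y, d (P.ar x y) = P.cup2 (P.ar (d x) y) (P.ar (d y) x)) ∧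
  (∀ x y, d (P.wa x y) = P.cup1 (P.wa (d x) y) (P.wa (d y) x))

/-- Deductive system. -/
def IsDS (P : PseudoBCI A) (D : Set A) : Prop :=
  P.one ∈ D ∧ ∀ x y, x ∈ D → P.ar x y ∈ D → y ∈ D

/-- A is p-semisimple: `x ≤ 1` implies `x = 1`. -/
def PSemisimple (P : PseudoBCI A) : Prop := ∀ x, P.le x P.one → x = P.one

end PseudoBCI

open PseudoBCI

section Aux
variable {A : Type*} (P : PseudoBCI A)

lemma ar_self (x : A) : P.ar x x = P.one := by
  have h := P.ax2 P.one P.one x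
  rw [P.ax4, P.ax4, P.ax3, P.ax3] at h
  exact h

lemma wa_self (x : A) : P.wa x x = P.one := by
  have h := P.ax1 P.one P.one x
  simp only [P.ax3, P.ax4] at h
  exact h

lemma ar_of_wa {x y : A} (h : P.wa x y = P.one) : P.ar x y = P.one := by
  have h2 := P.ax2 x y y
  rw [h, P.ax3, wa_self, P.ax3] at h2
  exact h2

lemma eq_of_ar (hss : P.PSemisimple) {x y : A} (h : P.ar x y = P.one) : x = y := by
  -- first: wa x y = 1
  have hw : P.wa x y = P.one := by
    have h2 := P.ax2 x y y
    rw [h, wa_self, P.ax3] at h2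
    exact hss _ h2
  -- ar y x = 1
  have h3 := P.ax1 x y x
  rw [h, P.ax4, ar_self] at h3
  have hyx : P.ar (P.ar y x) P.one = P.one := ar_of_wa P h3
  have hyx' : P.ar y x = P.one := hss _ hyx
  exact P.ax5 x y h hyx'

lemma cup1_eq (hss : P.PSemisimple) (x y : A) : P.cup1 x y = x := by
  have h := P.ax1 P.one x y
  rw [P.ax3, P.ax3] at h
  have har : P.ar x (P.wa (P.ar x y) y) = P.one := ar_of_wa P h
  exact (eq_of_ar P hss har).symm

lemma cup2_eq (hss : P.PSemisimple) (x y : A) : P.cup2 x y = x := by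
  have h := P.ax2 P.one x y
  simp only [P.ax3, P.ax4] at h
  exact (eq_of_ar P hss h).symm

end Aux

theorem stmt18 {A : Type*} (P : PseudoBCI A) (hss : P.PSemisimple) (d : A → A) :
    P.IsSDerII d ↔ P.IsIDerII d := by
  unfold IsSDerII IsIDerII
  simp only [cup1_eq P hss, cup2_eq P hss]
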